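/- arXiv:2507.22184 — 2 statements merged into one kernel-verified Lean document; each statement's English description precedes it below -/
import Mathlib

section
/- Let X be a finite set with two linear orders ≤₁ and ≤₂, and let s : X → {±1} be any function. For x ∈ X define ι₊₊(x) as the length of the longest sequence x₁, ..., x_k = x in X with s(x_i) = -s(x_{i-1}) for all i, and x_i ≤₁ x_{i+1}, x_i ≤₂ x_{i+1} for all i; define ι₊₋(x) analogously but requiring the sequence to be decreasing in ≤₂. Then for all x, y ∈ X with s(x) ≠ s(y), we have (ι₊₊(x), ι₊₋(x)) ≠ (ι₊₊(y), ι₊₋(y)). -/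
/-!
If `x` and `y` have different colours and `x <₁ y`, then every alternating chain ending at `x`
can be prolonged by `y`: in the `(+,+)` family when `x <₂ y`, in the `(+,-)` family when
`y <₂ x`. Either way one of the two indices is strictly larger at `y` than at `x`.
The suprema are attained because a chain is injective, so its length is at most `|X|`.
-/

/-- The length (number of elements) of the longest sequence ending at `x` that is
alternating for the coloring `s` and strictly increasing in both relations. -/
noncomputable def altChainLen {X : Type*} (lt₁ lt₂ : X → X → Prop) (s : X → ℤˣ)
    (x : X) : ℕ :=
  sSup {k : ℕ | ∃ g : Fin k → X, (∃ hk : 0 < k, g ⟨k - 1, by omega⟩ = x) ∧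
    ∀ i j : Fin k, (i : ℕ) + 1 = (j : ℕ) →
      s (g j) = -s (g i) ∧ lt₁ (g i) (g j) ∧ lt₂ (g i) (g j)}

namespace Fin

variable {β : Type*} {k : ℕ}

theorem rel_of_forall_rel_succ_of_lt (r : β → β → Prop) [IsTrans β r] {g : Fin k → β}
    (h : ∀ i j : Fin k, (i : ℕ) + 1 = j → r (g i) (g j)) ⦃i j : Fin k⦄ (hij : i < j) :
    r (g i) (g j) := by
  obtain ⟨i, hi⟩ := i
  obtain ⟨j, hj⟩ := j
  change i + 1 ≤ j at hij
  induction j, hij using Nat.le_induction with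
  | base => exact h _ _ rfl
  | succ j hij ih => exact _root_.trans (ih (by omega)) (h ⟨j, by omega⟩ _ rfl)

theorem injective_of_forall_rel_succ (r : β → β → Prop) [IsStrictOrder β r] {g : Fin k → β}
    (h : ∀ i j : Fin k, (i : ℕ) + 1 = j → r (g i) (g j)) : Function.Injective g := by
  intro i j hij
  by_contra hne
  rcases lt_or_gt_of_ne hne with hlt | hlt
  · exact ne_of_irrefl (rel_of_forall_rel_succ_of_lt r h hlt) hij
  · exact ne_of_irrefl (rel_of_forall_rel_succ_of_lt r h hlt) hij.symm

end Fin

section AltChain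

variable {X : Type*} {lt₁ lt₂ : X → X → Prop} {s : X → ℤˣ}

variable (lt₁ lt₂ s) in
def altChainLengths (x : X) : Set ℕ :=
  {k : ℕ | ∃ g : Fin k → X, (∃ hk : 0 < k, g ⟨k - 1, by omega⟩ = x) ∧
    ∀ i j : Fin k, (i : ℕ) + 1 = (j : ℕ) →
      s (g j) = -s (g i) ∧ lt₁ (g i) (g j) ∧ lt₂ (g i) (g j)}

theorem one_mem_altChainLengths (x : X) : 1 ∈ altChainLengths lt₁ lt₂ s x :=
  ⟨fun _ => x, ⟨one_pos, rfl⟩, fun i j _ => by omega⟩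

theorem le_card_of_mem_altChainLengths [Fintype X] [IsStrictOrder X lt₁] {x : X} {k : ℕ}
    (hk : k ∈ altChainLengths lt₁ lt₂ s x) : k ≤ Fintype.card X := by
  obtain ⟨g, -, hg⟩ := hk
  simpa using Fintype.card_le_of_injective g
    (Fin.injective_of_forall_rel_succ lt₁ fun i j hij => (hg i j hij).2.1)

theorem bddAbove_altChainLengths [Fintype X] [IsStrictOrder X lt₁] (x : X) :
    BddAbove (altChainLengths lt₁ lt₂ s x) :=
  ⟨Fintype.card X, fun _ => le_card_of_mem_altChainLengths⟩

theorem altChainLen_mem_altChainLengths [Fintype X] [IsStrictOrder X lt₁] (x : X) :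
    altChainLen lt₁ lt₂ s x ∈ altChainLengths lt₁ lt₂ s x :=
  Nat.sSup_mem ⟨1, one_mem_altChainLengths x⟩ (bddAbove_altChainLengths x)

theorem succ_mem_altChainLengths {x y : X} {k : ℕ} (hk : k ∈ altChainLengths lt₁ lt₂ s x)
    (hs : s y = -s x) (h1 : lt₁ x y) (h2 : lt₂ x y) :
    k + 1 ∈ altChainLengths lt₁ lt₂ s y := by
  obtain ⟨g, ⟨hk, rfl⟩, hg⟩ := hk
  refine ⟨Fin.snoc g y, ⟨k.succ_pos, Fin.snoc_last (α := fun _ => X) y g⟩, fun i j hij => ?_⟩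
  induction i using Fin.lastCases with
  | last => simp only [Fin.val_last] at hij; omega
  | cast i =>
    induction j using Fin.lastCases with
    | last =>
      have hi : i = ⟨k - 1, by omega⟩ := Fin.ext (by
        simp only [Fin.val_castSucc, Fin.val_last] at hij; change (i : ℕ) = k - 1; omega)
      rw [Fin.snoc_castSucc, Fin.snoc_last, hi]
      exact ⟨hs, h1, h2⟩
    | cast j => simpa only [Fin.snoc_castSucc] using hg i j hij

theorem altChainLen_lt_of_step [Fintype X] [IsStrictOrder X lt₁] {x y : X}
    (hs : s y = -s x) (h1 : lt₁ x y) (h2 : lt₂ x y) :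
    altChainLen lt₁ lt₂ s x < altChainLen lt₁ lt₂ s y :=
  le_csSup (bddAbove_altChainLengths y)
    (succ_mem_altChainLengths (altChainLen_mem_altChainLengths x) hs h1 h2)

end AltChain

/-- For two linear orders on a finite set `X` and a coloring `s : X → {±1}`,
points of different colors have distinct pairs `(ι₊₊, ι₊₋)`, where `ι₊₊ x`
(resp. `ι₊₋ x`) is the length of the longest `s`-alternating sequence ending at
`x` increasing in both orders (resp. increasing in the first and decreasing
in the second). -/
theorem iota_pair_injective_on_colors {X : Type*} [Fintype X]
    (lt₁ lt₂ : X → X → Prop)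
    (h₁ : IsStrictTotalOrder X lt₁) (h₂ : IsStrictTotalOrder X lt₂)
    (s : X → ℤˣ) :
    ∀ x y : X, s x ≠ s y →
      (altChainLen lt₁ lt₂ s x, altChainLen lt₁ (fun a b => lt₂ b a) s x) ≠
      (altChainLen lt₁ lt₂ s y, altChainLen lt₁ (fun a b => lt₂ b a) s y) := by
  intro x y hs
  have hxy : x ≠ y := fun h => hs (congrArg s h)
  wlog h1 : lt₁ x y generalizing x y
  · have h1' : lt₁ y x := (trichotomous_of lt₁ x y).resolve_left h1 |>.resolve_left hxy
    exact (this y x hs.symm hxy.symm h1').symm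
  have hsy : s y = -s x := Int.units_ne_iff_eq_neg.mp hs.symm
  rcases trichotomous_of lt₂ x y with h2 | rfl | h2
  · exact fun h => (altChainLen_lt_of_step hsy h1 h2).ne (congrArg Prod.fst h)
  · exact absurd rfl hxy
  · exact fun h => (altChainLen_lt_of_step (lt₂ := fun a b => lt₂ b a) hsy h1 h2).ne
      (congrArg Prod.snd h)
end

section
/- Fix d, m ≥ 1. Let R be the set of functions r : [d] → {±1} with r(1) = +1, linearly ordered lexicographically, and let X = [m]^R. For i = 1, …, d define the linear order ≤_i on X by: for x ≠ y, letting r ∈ R be the first coordinate where they differ, x ≤_i y iff r(i)·x_r < r(i)·y_r. Then any sequence of distinct elements of X that is monotone with respect to every ≤_i (for each i, either nondecreasing or nonincreasing) has at most m elements, and m = |X|^{1/2^{d-1}}. -/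
/-- `R`: the set of sign functions `r : [d] → {±1}` with `r 1 = +1`, a sign being
encoded as a `Bool` (`true` = `+1`, `false` = `-1`). -/
abbrev Rfun (d : ℕ) (hd : 0 < d) : Type :=
  {r : Fin d → Bool // r ⟨0, hd⟩ = true}

/-- The lexicographic rank of `r ∈ R` (earlier coordinates are more significant). -/
def rkR {d : ℕ} {hd : 0 < d} (r : Rfun d hd) : ℕ :=
  ∑ i : Fin d, (cond (r.val i) 1 0) * 2 ^ (d - 1 - (i : ℕ))

/-- The first coordinate (in the lexicographic order on `R`) where `x` and `y`
differ. -/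
noncomputable def firstDiff {d : ℕ} {hd : 0 < d} {m : ℕ}
    (x y : Rfun d hd → Fin m) (h : {r | x r ≠ y r}.Nonempty) : Rfun d hd :=
  Function.argminOn rkR {r | x r ≠ y r} h

/-- The linear order `≤_i` on `X = [m]^R`: `x ≤_i y` iff `x = y` or, at the first
coordinate `r` where they differ, `x r < y r` when `r i = +1` and `x r > y r`
when `r i = -1`. -/
noncomputable def leIdx {d : ℕ} {hd : 0 < d} {m : ℕ} (i : Fin d)
    (x y : Rfun d hd → Fin m) : Prop :=
  x = y ∨ ∃ h : {r | x r ≠ y r}.Nonempty,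
    (cond ((firstDiff x y h).val i)
      ((x (firstDiff x y h) : ℕ) < (y (firstDiff x y h) : ℕ))
      ((y (firstDiff x y h) : ℕ) < (x (firstDiff x y h) : ℕ)))

section

variable {d m : ℕ} {hd : 0 < d}

lemma card_Rfun (d : ℕ) (hd : 0 < d) : Fintype.card (Rfun d hd) = 2 ^ (d - 1) := by
  let e := ((Equiv.funSplitAt (⟨0, hd⟩ : Fin d) Bool).subtypeEquiv
      (p := fun r => r ⟨0, hd⟩ = true) (q := fun c => c.1 = true) fun _ => Iff.rfl).trans
    (Equiv.prodSubtypeFstEquivSubtypeProd (p := fun b : Bool => b = true))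
  simp [Fintype.card_congr e, Fintype.card_subtype_compl]

lemma firstDiff_comm (x y : Rfun d hd → Fin m) (h : {r | x r ≠ y r}.Nonempty)
    (h' : {r | y r ≠ x r}.Nonempty) : firstDiff y x h' = firstDiff x y h := by
  unfold firstDiff
  simp_rw [ne_comm]

lemma apply_firstDiff_ne (x y : Rfun d hd → Fin m) (h : {r | x r ≠ y r}.Nonempty) :
    x (firstDiff x y h) ≠ y (firstDiff x y h) :=
  Function.argminOn_mem rkR {r | x r ≠ y r} h

lemma firstDiff_apply_of_leIdx {i : Fin d} {x y : Rfun d hd → Fin m} (hxy : leIdx i x y)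
    (h : {r | x r ≠ y r}.Nonempty) :
    (firstDiff x y h).val i = decide ((x (firstDiff x y h) : ℕ) < y (firstDiff x y h)) := by
  rcases hxy with rfl | ⟨_, hlt⟩
  · exact absurd rfl h.some_mem
  · cases hb : (firstDiff x y h).val i <;> rw [hb] at hlt
    · simpa using hlt.le
    · simpa using hlt

lemma firstDiff_apply_of_leIdx_swap {i : Fin d} {x y : Rfun d hd → Fin m} (hyx : leIdx i y x)
    (h : {r | x r ≠ y r}.Nonempty) :
    (firstDiff x y h).val i = !decide ((x (firstDiff x y h) : ℕ) < y (firstDiff x y h)) := by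
  have h' : {r | y r ≠ x r}.Nonempty := by simpa only [ne_comm] using h
  have hne : (x (firstDiff x y h) : ℕ) ≠ y (firstDiff x y h) :=
    Fin.val_ne_of_ne (apply_firstDiff_ne x y h)
  have := firstDiff_apply_of_leIdx hyx h'
  rw [firstDiff_comm x y h h'] at this
  rw [this]
  by_cases hlt : (x (firstDiff x y h) : ℕ) < y (firstDiff x y h) <;> simp [hlt] <;> omega

/-- The sign of `x r < y r` at the first difference `r` is pinned to `ε 0` by `r 0 = true`;
each other coordinate of `r` then follows from the direction `ε i`. -/
lemma firstDiff_eq_of_forall_leIdx (ε : Fin d → Bool) {x y : Rfun d hd → Fin m}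
    (hxy : ∀ i, cond (ε i) (leIdx i x y) (leIdx i y x)) (h : {r | x r ≠ y r}.Nonempty) :
    firstDiff x y h = ⟨fun i => ε i == ε ⟨0, hd⟩, by simp⟩ := by
  set s := decide ((x (firstDiff x y h) : ℕ) < y (firstDiff x y h))
  have hr : ∀ i, (firstDiff x y h).val i = (ε i == s) := by
    intro i
    have hi := hxy i
    cases hε : ε i <;> rw [hε] at hi
    · rw [Bool.false_beq]
      exact firstDiff_apply_of_leIdx_swap hi h
    · rw [Bool.true_beq]
      exact firstDiff_apply_of_leIdx hi h
  have hs : s = ε ⟨0, hd⟩ := by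
    have h0 := hr ⟨0, hd⟩
    rw [(firstDiff x y h).prop] at h0
    exact (beq_iff_eq.mp h0.symm).symm
  ext i
  rw [hr i, hs]

lemma le_of_forall_leIdx_monotone (k : ℕ) (g : Fin k → (Rfun d hd → Fin m))
    (hg : Function.Injective g)
    (hmono : ∀ i : Fin d,
      (∀ a b : Fin k, a ≤ b → leIdx i (g a) (g b)) ∨
      (∀ a b : Fin k, a ≤ b → leIdx i (g b) (g a))) :
    k ≤ m := by
  classical
  let ε : Fin d → Bool := fun i => decide (∀ a b : Fin k, a ≤ b → leIdx i (g a) (g b))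
  have hε : ∀ a b : Fin k, a < b → ∀ i,
      cond (ε i) (leIdx i (g a) (g b)) (leIdx i (g b) (g a)) := by
    intro a b hab i
    by_cases hi : ∀ a b : Fin k, a ≤ b → leIdx i (g a) (g b)
    · rw [Bool.cond_decide, if_pos hi]
      exact hi a b hab.le
    · rw [Bool.cond_decide, if_neg hi]
      exact (hmono i).resolve_left hi a b hab.le
  let r₀ : Rfun d hd := ⟨fun i => ε i == ε ⟨0, hd⟩, by simp⟩
  refine Fin.le_of_injective (fun a => g a r₀) (Function.Injective.of_lt_imp_ne ?_)
  intro a b hab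
  have h : {r | g a r ≠ g b r}.Nonempty := Function.ne_iff.mp (hg.ne hab.ne)
  have := apply_firstDiff_ne (g a) (g b) h
  rwa [firstDiff_eq_of_forall_leIdx ε (hε a b hab) h] at this

end

theorem monotone_seq_le_m_general (d m : ℕ) (hd : 0 < d)
    (k : ℕ) (g : Fin k → (Rfun d hd → Fin m)) (hg : Function.Injective g)
    (hmono : ∀ i : Fin d,
      (∀ a b : Fin k, a ≤ b → leIdx i (g a) (g b)) ∨
      (∀ a b : Fin k, a ≤ b → leIdx i (g b) (g a))) :
    k ≤ m ∧
    (Fintype.card (Rfun d hd → Fin m) : ℝ) ^ ((1 : ℝ) / 2 ^ (d - 1)) = (m : ℝ) := by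
  refine ⟨le_of_forall_leIdx_monotone k g hg hmono, ?_⟩
  rw [Fintype.card_fun, Fintype.card_fin, card_Rfun, one_div]
  exact_mod_cast Real.pow_rpow_inv_natCast (Nat.cast_nonneg m) (by positivity)

/-- Sharpness construction: on `X = [m]^R` with the `2^(d-1)` lexicographic-type
orders `≤_i`, any sequence of distinct elements monotone with respect to every
`≤_i` has at most `m` elements, and `m = |X| ^ (1/2^(d-1))`. -/
theorem monotone_seq_le_m (d m : ℕ) (hd : 0 < d) (hm : 1 ≤ m)
    (k : ℕ) (g : Fin k → (Rfun d hd → Fin m)) (hg : Function.Injective g)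
    (hmono : ∀ i : Fin d,
      (∀ a b : Fin k, a ≤ b → leIdx i (g a) (g b)) ∨
      (∀ a b : Fin k, a ≤ b → leIdx i (g b) (g a))) :
    k ≤ m ∧
    (Fintype.card (Rfun d hd → Fin m) : ℝ) ^ ((1 : ℝ) / 2 ^ (d - 1)) = (m : ℝ) :=
  monotone_seq_le_m_general d m hd k g hg hmono
end
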